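/- Let P, Q be one-variable Laurent polynomials with integer coefficients and p a prime. If there exists some n_0 > 0 with p ∤ ct(P^{n_0}), then the sequence (ct(P^n Q) mod p)_{n∈ℕ} is recurrent: every finite factor that occurs in the sequence occurs infinitely often. -/

import Mathlib

open scoped Classical

/-- `Λ_p`: delete terms whose exponent is not divisible by `p` and substitute `x^p ↦ x`. -/
noncomputable def lam {R : Type*} [Semiring R] (p : ℕ) (hp : p ≠ 0) (Q : LaurentPolynomial R) :
    LaurentPolynomial R :=
  AddMonoidAlgebra.ofCoeff (Finsupp.comapDomain (fun i : ℤ => (p : ℤ) * i) (AddMonoidAlgebra.coeff Q)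
    ((mul_right_injective₀ (Int.natCast_ne_zero.mpr hp)).injOn))

/-- `substPow p Q = Q(x^p)`. -/
noncomputable def substPow {R : Type*} [Semiring R] (p : ℕ) (Q : LaurentPolynomial R) :
    LaurentPolynomial R :=
  AddMonoidAlgebra.ofCoeff (Finsupp.mapDomain (fun i : ℤ => (p : ℤ) * i) (AddMonoidAlgebra.coeff Q))

/-- The largest absolute value of an exponent with nonzero coefficient (`0` for `Q = 0`). -/
noncomputable def ldeg {R : Type*} [Semiring R] (Q : LaurentPolynomial R) : ℕ :=
  (AddMonoidAlgebra.coeff Q).support.sup fun i => i.natAbs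

section Aux

variable {R S : Type*} [CommSemiring R] [CommSemiring S]

/-- Coefficientwise map. -/
noncomputable def mr (h : R →+* S) (f : LaurentPolynomial R) : LaurentPolynomial S :=
  AddMonoidAlgebra.ofCoeff (Finsupp.mapRange h h.map_zero (AddMonoidAlgebra.coeff f))

lemma mr_apply (h : R →+* S) (f : LaurentPolynomial R) (a : ℤ) : AddMonoidAlgebra.coeff (mr h f) a = h (AddMonoidAlgebra.coeff f a) :=
  Finsupp.mapRange_apply (hf := h.map_zero)

lemma mr_add (h : R →+* S) (f g : LaurentPolynomial R) : mr h (f + g) = mr h f + mr h g :=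
  congrArg AddMonoidAlgebra.ofCoeff (Finsupp.mapRange_add h.map_add _ _)

lemma mr_single (h : R →+* S) (a : ℤ) (b : R) :
    mr h (AddMonoidAlgebra.single a b)
      = AddMonoidAlgebra.single a (h b) :=
  congrArg AddMonoidAlgebra.ofCoeff Finsupp.mapRange_single

lemma mr_zero (h : R →+* S) : mr h (0 : LaurentPolynomial R) = 0 :=
  congrArg AddMonoidAlgebra.ofCoeff Finsupp.mapRange_zero

lemma aux_mapRange_single_mul (h : R →+* S) (a : ℤ) (b : R) (g : LaurentPolynomial R) :
    mr h (AddMonoidAlgebra.single a b * g)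
      = AddMonoidAlgebra.single a (h b) * mr h g := by
  induction g using AddMonoidAlgebra.induction with
  | zero => rw [mul_zero, mr_zero, mul_zero]
  | single_add a' b' g _ _ ih =>
      rw [mul_add, mr_add, mr_add, mul_add, ih]
      congr 1
      rw [AddMonoidAlgebra.single_mul_single, mr_single, mr_single,
        AddMonoidAlgebra.single_mul_single, h.map_mul]

lemma aux_mapRange_mul (h : R →+* S) (f g : LaurentPolynomial R) :
    mr h (f * g) = mr h f * mr h g := by
  induction f using AddMonoidAlgebra.induction with
  | zero => rw [zero_mul, mr_zero, zero_mul]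
  | single_add a b f _ _ ih =>
      rw [add_mul, mr_add, mr_add, add_mul, ih, aux_mapRange_single_mul, mr_single]

/-- Coefficientwise map as a ring hom. -/
noncomputable def lmap (h : R →+* S) : LaurentPolynomial R →+* LaurentPolynomial S where
  toFun := mr h
  map_one' := by
    rw [AddMonoidAlgebra.one_def, mr_single, h.map_one, AddMonoidAlgebra.one_def]
  map_mul' := aux_mapRange_mul h
  map_zero' := mr_zero h
  map_add' := mr_add h

lemma lmap_apply (h : R →+* S) (f : LaurentPolynomial R) (a : ℤ) :
    AddMonoidAlgebra.coeff (lmap h f) a = h (AddMonoidAlgebra.coeff f a) := mr_apply h f a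

lemma ldeg_mul_le (f g : LaurentPolynomial R) : ldeg (f * g) ≤ ldeg f + ldeg g := by
  refine Finset.sup_le fun a ha => ?_
  have := AddMonoidAlgebra.support_coeff_mul_subset f g ha
  rw [Finset.mem_add] at this
  obtain ⟨b, hb, c, hc, rfl⟩ := this
  calc (b + c).natAbs ≤ b.natAbs + c.natAbs := Int.natAbs_add_le b c
    _ ≤ ldeg f + ldeg g :=
      Nat.add_le_add (Finset.le_sup (f := fun i : ℤ => i.natAbs) hb)
        (Finset.le_sup (f := fun i : ℤ => i.natAbs) hc)

lemma ldeg_one : ldeg (1 : LaurentPolynomial R) = 0 := by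
  refine Nat.le_zero.mp (Finset.sup_le fun a ha => ?_)
  have h1 : (AddMonoidAlgebra.coeff (1 : LaurentPolynomial R)).support ⊆ {0} := by
    rw [AddMonoidAlgebra.one_def]
    exact Finsupp.support_single_subset
  have h0 : a = 0 := by simpa using h1 ha
  simp [h0]

lemma ldeg_pow_le (f : LaurentPolynomial R) (n : ℕ) : ldeg (f ^ n) ≤ n * ldeg f := by
  induction n with
  | zero => simp [ldeg_one]
  | succ n ih =>
      calc ldeg (f ^ (n + 1)) = ldeg (f ^ n * f) := by rw [pow_succ]
        _ ≤ ldeg (f ^ n) + ldeg f := ldeg_mul_le _ _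
        _ ≤ n * ldeg f + ldeg f := Nat.add_le_add_right ih _
        _ = (n + 1) * ldeg f := by ring

lemma substPow_apply_zero (q : ℕ) (hq : q ≠ 0) (f : LaurentPolynomial R) :
    AddMonoidAlgebra.coeff (substPow q f) 0 = AddMonoidAlgebra.coeff f 0 := by
  have hinj : Function.Injective (fun i : ℤ => (q : ℤ) * i) :=
    mul_right_injective₀ (Int.natCast_ne_zero.mpr hq)
  have := Finsupp.mapDomain_apply hinj (AddMonoidAlgebra.coeff f) 0
  simpa [substPow] using this

/-- Key coefficient computation. -/
lemma key_ct (q : ℕ) (hq : 0 < q) (f h : LaurentPolynomial R) (hdeg : ldeg f < q) :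
    AddMonoidAlgebra.coeff (f * substPow q h) 0 = AddMonoidAlgebra.coeff f 0 * AddMonoidAlgebra.coeff h 0 := by
  classical
  rw [AddMonoidAlgebra.coeff_mul]
  have inner : ∀ a₁ : ℤ, ∀ b₁ : R,
      (Finsupp.sum (AddMonoidAlgebra.coeff (substPow q h)) fun a₂ b₂ => if a₁ + a₂ = 0 then b₁ * b₂ else 0)
        = b₁ * AddMonoidAlgebra.coeff (substPow q h) (-a₁) := by
    intro a₁ b₁
    rw [Finsupp.sum, Finset.sum_eq_single (-a₁)]
    · rw [if_pos (by ring)]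
    · intro b _ hne
      rw [if_neg (by omega)]
    · intro hnot
      rw [if_pos (by ring), Finsupp.notMem_support_iff.mp hnot, mul_zero]
  simp_rw [inner]
  rw [Finsupp.sum_eq_single 0]
  · rw [neg_zero, substPow_apply_zero q hq.ne']
  · intro a ha hane
    have hmem : a ∈ (AddMonoidAlgebra.coeff f).support := Finsupp.mem_support_iff.mpr ha
    have hle : a.natAbs ≤ ldeg f := Finset.le_sup (f := fun i : ℤ => i.natAbs) hmem
    have hz : AddMonoidAlgebra.coeff (substPow q h) (-a) = 0 := by
      apply Finsupp.mapDomain_notin_range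
      rintro ⟨m, hm⟩
      -- hm : q * m = -a
      have h1 : a.natAbs = q * m.natAbs := by
        have := congrArg Int.natAbs hm
        simpa [Int.natAbs_mul] using this.symm
      have ha0 : a.natAbs ≠ 0 := fun hcon => hane (Int.natAbs_eq_zero.mp hcon)
      have hm1 : 1 ≤ m.natAbs := by
        rcases Nat.eq_zero_or_pos m.natAbs with h' | h'
        · rw [h', mul_zero] at h1; exact absurd h1 ha0
        · exact h'
      have : q ≤ q * m.natAbs := Nat.le_mul_of_pos_right q hm1
      omega
    rw [hz, mul_zero]
  · intro _; rw [zero_mul]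

end Aux

section Frob

variable (p : ℕ) [hF : Fact p.Prime]

lemma frob_pow (f : LaurentPolynomial (ZMod p)) : f ^ p = substPow p f := by
  haveI : CharP (LaurentPolynomial (ZMod p)) p := by
    refine charP_of_injective_ringHom (R := ZMod p) (f := LaurentPolynomial.C) ?_ p
    intro a b hab
    have := congrArg (fun x => AddMonoidAlgebra.coeff x 0) hab
    simpa using this
  induction f using AddMonoidAlgebra.induction with
  | zero =>
      rw [show ((0 : LaurentPolynomial (ZMod p)) ^ p) = 0 from zero_pow hF.out.ne_zero]
      simp [substPow]
  | single_add a b f _ _ ih =>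
      have hadd := add_pow_char (R := LaurentPolynomial (ZMod p)) (p := p)
        (x := AddMonoidAlgebra.single a b) (y := f)
      have hsing : (AddMonoidAlgebra.single a b : LaurentPolynomial (ZMod p)) ^ p
          = AddMonoidAlgebra.single ((p : ℤ) * a) b := by
        rw [AddMonoidAlgebra.single_pow, ZMod.pow_card, nsmul_eq_mul]
      refine Eq.trans hadd ?_
      rw [hsing, ih]
      show _ = AddMonoidAlgebra.ofCoeff (Finsupp.mapDomain (fun i : ℤ => (p : ℤ) * i) (Finsupp.single a b + AddMonoidAlgebra.coeff f))
      rw [Finsupp.mapDomain_add, Finsupp.mapDomain_single]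
      rfl

lemma frob_pow_pow (f : LaurentPolynomial (ZMod p)) (k : ℕ) :
    f ^ (p ^ k) = substPow (p ^ k) f := by
  induction k with
  | zero =>
      have he : (fun i : ℤ => ((1 : ℕ) : ℤ) * i) = id := by
        funext i; simp
      rw [pow_zero, pow_one, substPow, he, Finsupp.mapDomain_id]
  | succ k ih =>
      rw [pow_succ, pow_mul, ih, frob_pow]
      rw [substPow, substPow, substPow, AddMonoidAlgebra.coeff_ofCoeff, ← Finsupp.mapDomain_comp]
      congr 2
      funext i
      simp only [Function.comp_apply]
      push_cast
      ring

end Frob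

section Main

variable {p : ℕ} [hF : Fact p.Prime]

/-- One shift step: multiply constant terms by `c = ct(P'^n₀)`. -/
lemma stepB (P' Q' : LaurentPolynomial (ZMod p)) (n₀ : ℕ) (hn₀ : 0 < n₀) (N : ℕ) :
    ∃ j : ℕ, 0 < j ∧ ∀ n < N,
      AddMonoidAlgebra.coeff (P' ^ (n + j) * Q') 0 = AddMonoidAlgebra.coeff (P' ^ n₀) 0 * (AddMonoidAlgebra.coeff (P' ^ n * Q') 0) := by
  set B := N * ldeg P' + ldeg Q' with hB
  have hpk : B < p ^ B := Nat.lt_pow_self (n := B) hF.out.one_lt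
  refine ⟨n₀ * p ^ B, Nat.mul_pos hn₀ (pow_pos hF.out.pos B), fun n hn => ?_⟩
  have hdeg : ldeg (P' ^ n * Q') < p ^ B := by
    calc ldeg (P' ^ n * Q') ≤ ldeg (P' ^ n) + ldeg Q' := ldeg_mul_le _ _
      _ ≤ n * ldeg P' + ldeg Q' := Nat.add_le_add_right (ldeg_pow_le _ _) _
      _ ≤ N * ldeg P' + ldeg Q' :=
          Nat.add_le_add_right (Nat.mul_le_mul_right _ hn.le) _
      _ < p ^ B := hpk
  have hrw : P' ^ (n + n₀ * p ^ B) * Q'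
      = (P' ^ n * Q') * substPow (p ^ B) (P' ^ n₀) := by
    rw [← frob_pow_pow, ← pow_mul, pow_add]
    ring
  rw [hrw, key_ct (p ^ B) (pow_pos hF.out.pos B) _ _ hdeg, mul_comm]

lemma stepC (P' Q' : LaurentPolynomial (ZMod p)) (n₀ : ℕ) (hn₀ : 0 < n₀) (e : ℕ) :
    ∀ N : ℕ, ∃ j : ℕ, 0 < j ∧ ∀ n < N,
      AddMonoidAlgebra.coeff (P' ^ (n + j) * Q') 0 = (AddMonoidAlgebra.coeff (P' ^ n₀) 0) ^ (e + 1) * (AddMonoidAlgebra.coeff (P' ^ n * Q') 0) := by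
  induction e with
  | zero =>
      intro N
      obtain ⟨j, hj, hjp⟩ := stepB P' Q' n₀ hn₀ N
      exact ⟨j, hj, fun n hn => by rw [hjp n hn, pow_one]⟩
  | succ e ih =>
      intro N
      obtain ⟨j₂, hj₂, hjp₂⟩ := stepB P' Q' n₀ hn₀ N
      obtain ⟨j₁, hj₁, hjp₁⟩ := ih (N + j₂)
      refine ⟨j₂ + j₁, by omega, fun n hn => ?_⟩
      have h1 : AddMonoidAlgebra.coeff (P' ^ ((n + j₂) + j₁) * Q') 0
          = (AddMonoidAlgebra.coeff (P' ^ n₀) 0) ^ (e + 1) * (AddMonoidAlgebra.coeff (P' ^ (n + j₂) * Q') 0) :=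
        hjp₁ (n + j₂) (by omega)
      rw [show n + (j₂ + j₁) = (n + j₂) + j₁ by ring, h1, hjp₂ n hn, pow_succ]
      ring

end Main

/-- if `p ∤ ct(P^{n₀})` for some `n₀ > 0`, then `(ct(P^n Q) mod p)_n` is
recurrent: every factor that occurs has a later occurrence (hence occurs infinitely often). -/
theorem stmt15 (p : ℕ) (hp : p.Prime) (P Q : LaurentPolynomial ℤ)
    (h : ∃ n₀ : ℕ, 0 < n₀ ∧ ¬ (p : ℤ) ∣ AddMonoidAlgebra.coeff (P ^ n₀) 0) :
    ∀ i L : ℕ, ∃ j : ℕ, 0 < j ∧ ∀ t < L,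
      ((AddMonoidAlgebra.coeff (P ^ (i + j + t) * Q) 0 : ℤ) : ZMod p) = ((AddMonoidAlgebra.coeff (P ^ (i + t) * Q) 0 : ℤ) : ZMod p) := by
  haveI : Fact p.Prime := ⟨hp⟩
  obtain ⟨n₀, hn₀, hnd⟩ := h
  set φ := lmap (Int.castRingHom (ZMod p)) with hφ
  set P' := φ P with hP'
  set Q' := φ Q with hQ'
  have hcast : ∀ m : ℕ, ∀ a : ℤ, ((AddMonoidAlgebra.coeff (P ^ m * Q) a : ℤ) : ZMod p) = AddMonoidAlgebra.coeff (P' ^ m * Q') a := by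
    intro m a
    have h1 : P' ^ m * Q' = φ (P ^ m * Q) := by rw [map_mul, map_pow]
    rw [h1, lmap_apply]
    rfl
  have hc : AddMonoidAlgebra.coeff (P' ^ n₀) 0 ≠ 0 := by
    have h2 : AddMonoidAlgebra.coeff (P' ^ n₀) 0 = ((AddMonoidAlgebra.coeff (P ^ n₀) 0 : ℤ) : ZMod p) := by
      rw [hP', ← map_pow, lmap_apply]; rfl
    rw [h2]
    intro hcon
    exact hnd ((ZMod.intCast_zmod_eq_zero_iff_dvd _ p).mp hcon)
  intro i L
  obtain ⟨j, hj, hjp⟩ := stepC P' Q' n₀ hn₀ (p - 2) (i + L)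
  have hone : (AddMonoidAlgebra.coeff (P' ^ n₀) 0) ^ (p - 2 + 1) = 1 := by
    have h21 : p - 2 + 1 = p - 1 := by
      have := hp.two_le; omega
    rw [h21]
    exact ZMod.pow_card_sub_one_eq_one hc
  refine ⟨j, hj, fun t ht => ?_⟩
  have h3 := hjp (i + t) (by omega)
  rw [hone, one_mul] at h3
  rw [hcast, hcast, show i + j + t = i + t + j by ring, h3]
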